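/- arXiv:1708.03189 — 3 statements merged into one kernel-verified Lean document; each statement's English description precedes it below -/
import Mathlib

section
/- Let (x_n)_{0 ≤ n < 2^m} be a (0,m,2)-net in base 2 with m ≥ 4 and m ≡ 0 (mod 4), and suppose x_0 = γ = (γ^{(1)}, γ^{(2)}) where γ^{(1)} = 2^{−2} + 2^{−4} + ... + 2^{−m/2} and γ^{(2)} = 2^{−(m/2+2)} + 2^{−(m/2+4)} + ... + 2^{−m}. Then for N = 2^m one has (1/N) Δ(γ, (x_n)_{0 ≤ n < 2^m}) ≤ −(1/4) · m / 2^{m+2}, and consequently D*((x_n)_{0 ≤ n < N}) ≥ (1/(16 log 2)) · (log N)/N. -/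
open Finset

open scoped Classical

/-- The radical inverse function in base `b`: `φ_b(n) = Σ_j n_j b^{-j-1}`. -/
noncomputable def radInv (b n : ℕ) : ℝ :=
  ∑' j : ℕ, ((n / b ^ j % b : ℕ) : ℝ) / (b : ℝ) ^ (j + 1)

/-- The axis-parallel box `[0, y) = ∏_i [0, y_i)`. -/
def box {s : ℕ} (y : Fin s → ℝ) : Set (Fin s → ℝ) :=
  Set.univ.pi fun i => Set.Ico 0 (y i)

/-- The discrepancy function `Δ(y, (x_n)_{n=a}^{a+N-1})`. -/
noncomputable def disc {s : ℕ} (x : ℕ → Fin s → ℝ) (a N : ℕ) (y : Fin s → ℝ) : ℝ :=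
  ∑ n ∈ Finset.Ico a (a + N),
    ((box y).indicator (fun _ => (1 : ℝ)) (x n) - ∏ i, y i)

/-- The star discrepancy of `(x_n)_{n=a}^{a+N-1}`. -/
noncomputable def Dstar {s : ℕ} (x : ℕ → Fin s → ℝ) (a N : ℕ) : ℝ :=
  sSup {v : ℝ | ∃ y : Fin s → ℝ, (∀ i, y i ∈ Set.Ico (0 : ℝ) 1) ∧
    v = |disc x a N y| / (N : ℝ)}

/-- `(x_n)_{0 ≤ n < b^m}` is a `(t,m,s)`-net in base `b`. -/
def IsNet {s : ℕ} (b t m : ℕ) (x : ℕ → Fin s → ℝ) : Prop :=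
  (∀ n < b ^ m, ∀ i, x n i ∈ Set.Ico (0 : ℝ) 1) ∧
  ∀ d a : Fin s → ℕ, (∀ i, a i < b ^ d i) → (∑ i, d i) + t = m →
    ((Finset.range (b ^ m)).filter
      (fun n => ∀ i, x n i ∈ Set.Ico ((a i : ℝ) / b ^ d i) ((a i + 1 : ℝ) / b ^ d i))).card
      = b ^ t

/-- The `j`-th `b`-adic digit (`j ≥ 1`) of a real number `x ∈ [0,1)`. -/
noncomputable def bdigit (b : ℕ) (x : ℝ) (j : ℕ) : ℕ := (⌊x * (b : ℝ) ^ j⌋ % (b : ℤ)).toNat % b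

/-- The `b`-adic absolute valuation `‖x‖_b = b^{-(k+1)}` where the digits
`x_1, …, x_k` vanish and `x_{k+1} ≠ 0`; it is `0` when all digits vanish. -/
noncomputable def bval (b : ℕ) (x : ℝ) : ℝ :=
  if h : ∃ j, 1 ≤ j ∧ bdigit b x j ≠ 0 then
    (1 : ℝ) / (b : ℝ) ^ sInf {j | 1 ≤ j ∧ bdigit b x j ≠ 0}
  else 0

/-- The `b`-adic absolute valuation of a vector, `‖x‖_b = ∏_j ‖x^{(j)}‖_b`. -/
noncomputable def bvalVec {s : ℕ} (b : ℕ) (x : Fin s → ℝ) : ℝ := ∏ i, bval b (x i)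

/-- Digitwise subtraction modulo `b`: `x ⊖ σ`. -/
noncomputable def bsub (b : ℕ) (x σ : ℝ) : ℝ :=
  ∑' j : ℕ, (((bdigit b x (j + 1) + b - bdigit b σ (j + 1)) % b : ℕ) : ℝ) / (b : ℝ) ^ (j + 1)

/-- Digitwise addition modulo `b`: `x ⊕ σ`. -/
noncomputable def badd (b : ℕ) (x σ : ℝ) : ℝ :=
  ∑' j : ℕ, (((bdigit b x (j + 1) + bdigit b σ (j + 1)) % b : ℕ) : ℝ) / (b : ℝ) ^ (j + 1)

/-- A `b^m`-point set in `[0,1)^s` is `d`-admissible in base `b`. -/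
def IsAdmissible {s : ℕ} (b m : ℕ) (d : ℤ) (x : ℕ → Fin s → ℝ) : Prop :=
  ∀ k n : ℕ, k < n → n < b ^ m →
    bvalVec b (fun i => bsub b (x n i) (x k i)) > (b : ℝ) ^ (-((m : ℤ) + d))

/-- The two-dimensional Halton sequence in bases `2` and `3`. -/
noncomputable def H23 : ℕ → Fin 2 → ℝ := fun n => ![radInv 2 n, radInv 3 n]

/-- `ytil` is the quantity `ỹ_m` for the Halton sequence in bases `2` and `3`
(so that `τ₁ = 2`, `τ₂ = 1`). -/
def IsYtilde (m ytil : ℕ) : Prop :=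
  ytil < 2 ^ (2 * (m + 1)) * 3 ^ (m + 1) ∧
  ∃ M₁ M₂ : ℤ,
    M₁ * 3 ^ (m + 1) ≡ 1 [ZMOD (2 : ℤ) ^ (2 * (m + 1))] ∧
    M₂ * 2 ^ (2 * (m + 1)) ≡ 1 [ZMOD (3 : ℤ) ^ (m + 1)] ∧
    (ytil : ℤ) ≡ M₁ * 3 ^ (m + 1) * (∑ j ∈ Finset.Icc 1 (m + 1), (2 : ℤ) ^ (2 * j - 1))
        + M₂ * 2 ^ (2 * (m + 1)) * (∑ j ∈ Finset.Icc 1 (m + 1), (3 : ℤ) ^ (j - 1))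
      [ZMOD (2 : ℤ) ^ (2 * (m + 1)) * 3 ^ (m + 1)]

/-!
Write `m = 4q` and `g_j = 4⁻¹ + ⋯ + 4⁻ʲ`, so that `γ = (g_q, 4⁻ᵠ g_q)`. The box `[0, γ)` is the
disjoint union of the cells `[g_j, g_{j+1}) × 4⁻ᵠ [g_k, g_{k+1})`, `j, k < q`, each of which is a
dyadic elementary box. If `j + k + 2 ≤ q` the cell has volume at least `2⁻ᵐ`, so the net puts
exactly `N · vol` points in it. Otherwise the cell sits inside an elementary box of volume `2⁻ᵐ`
that contains `γ = x_0` while the cell does not; such a box holds a single point of the net, so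
the cell is empty. Hence `Δ(γ) = -∑_{j+k+2>q} N · vol`, and the `q` cells with `j + k + 1 = q`
alone contribute `-1/4` each.
-/

def elementaryInterval (b d a : ℕ) : Set ℝ := Set.Ico ((a : ℝ) / b ^ d) ((a + 1 : ℝ) / b ^ d)

section Nets

variable {s b t m : ℕ} {x : ℕ → Fin s → ℝ}

theorem mem_elementaryInterval_iff (hb : 0 < b) {d a : ℕ} {y : ℝ} :
    y ∈ elementaryInterval b d a ↔ ⌊y * b ^ d⌋ = a := by
  have hpos : (0 : ℝ) < (b : ℝ) ^ d := by positivity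
  rw [elementaryInterval, Set.mem_Ico, div_le_iff₀ hpos, lt_div_iff₀ hpos, Int.floor_eq_iff]
  push_cast
  rfl

theorem mem_elementaryInterval_succ_iff (hb : 0 < b) {d a r : ℕ} (hr : r < b) {y : ℝ} :
    y ∈ elementaryInterval b (d + 1) (b * a + r) ↔
      y ∈ elementaryInterval b d a ∧ (⌊y * b ^ (d + 1)⌋ % b).toNat = r := by
  have hdiv : ⌊y * b ^ d⌋ = ⌊y * b ^ (d + 1)⌋ / b := by
    rw [← Int.floor_div_natCast, pow_succ, ← mul_assoc, mul_div_cancel_right₀ _ (by positivity)]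
  rw [mem_elementaryInterval_iff hb, mem_elementaryInterval_iff hb, hdiv]
  generalize ⌊y * b ^ (d + 1)⌋ = z
  have hb' : (0 : ℤ) < b := by exact_mod_cast hb
  have hmod : (z % b).toNat = r ↔ z % b = r := by
    have := Int.emod_nonneg z hb'.ne'
    omega
  rw [hmod, Int.ediv_emod_unique hb']
  push_cast
  omega

theorem card_filter_elementaryInterval_eq_sum (hb : 0 < b) (N : ℕ) (d a : Fin s → ℕ) (i : Fin s) :
    #{n ∈ range N | ∀ j, x n j ∈ elementaryInterval b (d j) (a j)} =
      ∑ r ∈ range b, #{n ∈ range N | ∀ j, x n j ∈ elementaryInterval b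
        (Function.update d i (d i + 1) j) (Function.update a i (b * a i + r) j)} := by
  refine (card_eq_sum_card_fiberwise (f := fun n => (⌊x n i * b ^ (d i + 1)⌋ % b).toNat)
    (t := range b) fun n _ => ?_).trans (sum_congr rfl fun r hr => ?_)
  · have := Int.emod_lt_of_pos ⌊x n i * b ^ (d i + 1)⌋ (by exact_mod_cast hb : (0 : ℤ) < b)
    simp only [coe_range, Set.mem_Iio]
    omega
  · rw [filter_filter]
    congr 1
    apply filter_congr
    intro n _
    have hsucc := mem_elementaryInterval_succ_iff hb (mem_range.1 hr) (d := d i) (a := a i)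
      (y := x n i)
    constructor
    · rintro ⟨hall, hdigit⟩ j
      rcases eq_or_ne j i with rfl | hj
      · simpa using hsucc.2 ⟨hall j, hdigit⟩
      · simpa [Function.update_of_ne hj] using hall j
    · intro hall
      have hi := hsucc.1 (by simpa using hall i)
      refine ⟨fun j => ?_, hi.2⟩
      rcases eq_or_ne j i with rfl | hj
      · exact hi.1
      · simpa [Function.update_of_ne hj] using hall j

theorem IsNet.card_filter_elementaryInterval [NeZero s] (hb : 0 < b) (hx : IsNet b t m x)
    (e : ℕ) {d a : Fin s → ℕ} (ha : ∀ i, a i < b ^ d i) (hd : ∑ i, d i + t + e = m) :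
    #{n ∈ range (b ^ m) | ∀ i, x n i ∈ elementaryInterval b (d i) (a i)} = b ^ (t + e) := by
  induction e generalizing d a with
  | zero =>
    rw [add_zero]
    convert hx.2 d a ha hd using 2
    exact filter_congr fun _ _ => Iff.rfl
  | succ e ih =>
    have hcell : ∀ r ∈ range b, #{n ∈ range (b ^ m) | ∀ i, x n i ∈ elementaryInterval b
        (Function.update d 0 (d 0 + 1) i) (Function.update a 0 (b * a 0 + r) i)} = b ^ (t + e) := by
      intro r hr
      refine ih (fun i => ?_) ?_
      · rcases eq_or_ne i 0 with rfl | hi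
        · simp only [Function.update_self]
          calc b * a 0 + r < b * (a 0 + 1) := by rw [mem_range] at hr; linarith
            _ ≤ b * b ^ d 0 := Nat.mul_le_mul_left _ (ha 0)
            _ = b ^ (d 0 + 1) := by ring
        · simpa [Function.update_of_ne hi] using ha i
      · rw [sum_update_of_mem (mem_univ 0)]
        rw [sum_eq_add_sum_sdiff_singleton_of_mem (mem_univ 0)] at hd
        omega
    rw [card_filter_elementaryInterval_eq_sum hb _ d a 0, sum_congr rfl hcell, sum_const,
      card_range, smul_eq_mul]
    ring

theorem IsNet.eq_of_mem_elementaryInterval (hx : IsNet b 0 m x) {d a : Fin s → ℕ}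
    (ha : ∀ i, a i < b ^ d i) (hd : ∑ i, d i = m) {n₁ n₂ : ℕ} (hn₁ : n₁ < b ^ m) (hn₂ : n₂ < b ^ m)
    (hx₁ : ∀ i, x n₁ i ∈ elementaryInterval b (d i) (a i))
    (hx₂ : ∀ i, x n₂ i ∈ elementaryInterval b (d i) (a i)) : n₁ = n₂ := by
  obtain ⟨n, hn⟩ := card_eq_one.1 (hx.2 d a ha (by simpa using hd))
  have h₁ : n₁ ∈ ({n} : Finset ℕ) := hn ▸ mem_filter.2 ⟨mem_range.2 hn₁, hx₁⟩
  have h₂ : n₂ ∈ ({n} : Finset ℕ) := hn ▸ mem_filter.2 ⟨mem_range.2 hn₂, hx₂⟩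
  rw [mem_singleton] at h₁ h₂
  rw [h₁, h₂]

end Nets

section Discrepancy

variable {s : ℕ}

theorem disc_zero_eq_card_sub (x : ℕ → Fin s → ℝ) (N : ℕ) (y : Fin s → ℝ) :
    disc x 0 N y = #{n ∈ range N | x n ∈ box y} - N * ∏ i, y i := by
  rw [disc, zero_add, ← range_eq_Ico, sum_sub_distrib, sum_const, card_range, nsmul_eq_mul]
  simp [Set.indicator_apply]

theorem abs_disc_le (x : ℕ → Fin s → ℝ) (a N : ℕ) {y : Fin s → ℝ}
    (hy : ∀ i, y i ∈ Set.Icc (0 : ℝ) 1) : |disc x a N y| ≤ N := by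
  have hprod : ∏ i, y i ∈ Set.Icc (0 : ℝ) 1 :=
    ⟨prod_nonneg fun i _ => (hy i).1, prod_le_one (fun i _ => (hy i).1) fun i _ => (hy i).2⟩
  calc |disc x a N y| ≤ ∑ n ∈ Ico a (a + N), (1 : ℝ) := by
        refine (abs_sum_le_sum_abs _ _).trans (sum_le_sum fun n _ => abs_le.2 ⟨?_, ?_⟩) <;>
        by_cases hn : x n ∈ box y <;> simp [hn] <;> linarith [hprod.1, hprod.2]
    _ = N := by simp

theorem abs_disc_div_le_Dstar (x : ℕ → Fin s → ℝ) (a N : ℕ) {y : Fin s → ℝ}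
    (hy : ∀ i, y i ∈ Set.Ico (0 : ℝ) 1) : |disc x a N y| / N ≤ Dstar x a N := by
  refine le_csSup ⟨1, ?_⟩ ⟨y, hy, rfl⟩
  rintro v ⟨z, hz, rfl⟩
  exact div_le_one_of_le₀ (abs_disc_le x a N fun i => Set.Ico_subset_Icc_self (hz i)) N.cast_nonneg

theorem card_filter_mem_Ico_eq_sum {α : Type*} (S : Finset α) (f : α → ℝ) {u : ℕ → ℝ}
    (hu : Monotone u) (p : ℕ) :
    #{a ∈ S | f a ∈ Set.Ico (u 0) (u p)} =
      ∑ j ∈ range p, #{a ∈ S | f a ∈ Set.Ico (u j) (u (j + 1))} := by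
  induction p with
  | zero => simp
  | succ p ih =>
    have hsplit : {a ∈ S | f a ∈ Set.Ico (u 0) (u (p + 1))} =
        {a ∈ S | f a ∈ Set.Ico (u 0) (u p)} ∪ {a ∈ S | f a ∈ Set.Ico (u p) (u (p + 1))} := by
      rw [← filter_or]
      refine filter_congr fun a _ => ?_
      rw [← Set.mem_union, Set.Ico_union_Ico_eq_Ico (hu p.zero_le) (hu p.le_succ)]
    rw [sum_range_succ, ← ih, hsplit, card_union_of_disjoint (disjoint_filter.2 fun a _ h₁ h₂ =>
      Set.disjoint_left.1 Set.Ico_disjoint_Ico_same h₁ h₂)]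

theorem disc_eq_sum_cells (x : ℕ → Fin 2 → ℝ) (N : ℕ) {u v : ℕ → ℝ} (hu : Monotone u)
    (hv : Monotone v) (hu0 : u 0 = 0) (hv0 : v 0 = 0) (p r : ℕ) :
    disc x 0 N ![u p, v r] = ∑ j ∈ range p, ∑ k ∈ range r,
      ((#{n ∈ range N | x n 0 ∈ Set.Ico (u j) (u (j + 1)) ∧ x n 1 ∈ Set.Ico (v k) (v (k + 1))} : ℝ)
        - N * ((u (j + 1) - u j) * (v (k + 1) - v k))) := by
  have hcount : #{n ∈ range N | x n ∈ box ![u p, v r]} = ∑ j ∈ range p, ∑ k ∈ range r,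
      #{n ∈ range N | x n 0 ∈ Set.Ico (u j) (u (j + 1)) ∧ x n 1 ∈ Set.Ico (v k) (v (k + 1))} := by
    have hbox : {n ∈ range N | x n ∈ box ![u p, v r]} =
        {n ∈ {n ∈ range N | x n 1 ∈ Set.Ico (v 0) (v r)} | x n 0 ∈ Set.Ico (u 0) (u p)} := by
      rw [filter_filter, hu0, hv0]
      refine filter_congr fun n _ => ?_
      simp only [_root_.box, Set.mem_univ_pi, Fin.forall_fin_two]
      simp [and_comm]
    rw [hbox, card_filter_mem_Ico_eq_sum _ _ hu]
    refine sum_congr rfl fun j _ => ?_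
    rw [filter_comm, card_filter_mem_Ico_eq_sum _ _ hv]
    simp only [filter_filter]
  have hprod : ∏ i, ![u p, v r] i = ∑ j ∈ range p, ∑ k ∈ range r,
      (u (j + 1) - u j) * (v (k + 1) - v k) := by
    rw [Fin.prod_univ_two, ← sum_mul_sum, sum_range_sub, sum_range_sub, hu0, hv0]
    simp
  rw [disc_zero_eq_card_sub, hcount, hprod, mul_sum]
  push_cast
  rw [← sum_sub_distrib]
  refine sum_congr rfl fun j _ => ?_
  rw [mul_sum, ← sum_sub_distrib]

end Discrepancy

noncomputable def quarterSum (j : ℕ) : ℝ := ∑ i ∈ Icc 1 j, (1 / 4 : ℝ) ^ i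

@[simp]
theorem quarterSum_zero : quarterSum 0 = 0 := by simp [quarterSum]

theorem quarterSum_succ (j : ℕ) : quarterSum (j + 1) = quarterSum j + (1 / 4) ^ (j + 1) :=
  sum_Icc_succ_top (by omega) _

theorem quarterSum_eq (j : ℕ) : quarterSum j = (1 - (1 / 4 : ℝ) ^ j) / 3 := by
  induction j with
  | zero => simp
  | succ j ih => rw [quarterSum_succ, ih, pow_succ]; ring

theorem quarterSum_monotone : Monotone quarterSum :=
  monotone_nat_of_le_succ fun j => by
    rw [quarterSum_succ]
    exact le_add_of_nonneg_right (by positivity)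

theorem quarterSum_nonneg (j : ℕ) : 0 ≤ quarterSum j :=
  quarterSum_zero ▸ quarterSum_monotone j.zero_le

theorem quarterSum_lt_one (j : ℕ) : quarterSum j < 1 := by
  rw [quarterSum_eq]; linarith [pow_pos (by norm_num : (0 : ℝ) < 1 / 4) j]

theorem quarterSum_lt_add_half (j k : ℕ) : quarterSum k < quarterSum j + (1 / 4) ^ j / 2 := by
  rw [quarterSum_eq, quarterSum_eq]
  linarith [pow_pos (by norm_num : (0 : ℝ) < 1 / 4) j, pow_pos (by norm_num : (0 : ℝ) < 1 / 4) k]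

theorem exists_nat_quarterSum_eq (j : ℕ) : ∃ a : ℕ, a < 4 ^ j ∧ quarterSum j = a / 4 ^ j := by
  induction j with
  | zero => exact ⟨0, by simp⟩
  | succ j ih =>
    obtain ⟨a, ha, hqa⟩ := ih
    refine ⟨4 * a + 1, by rw [pow_succ]; omega, ?_⟩
    rw [quarterSum_succ, hqa]
    simp only [one_div, inv_pow]
    push_cast
    field_simp
    ring

theorem sum_half_pow_eq_quarterSum (p q : ℕ) :
    ∑ j ∈ Icc 1 q, (1 / 2 : ℝ) ^ (2 * p + 2 * j) = (1 / 4) ^ p * quarterSum q := by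
  rw [quarterSum, mul_sum]
  refine sum_congr rfl fun j _ => ?_
  rw [pow_add, pow_mul, pow_mul]
  norm_num

theorem two_pow_mul_quarter_pow (n l : ℕ) : (2 : ℝ) ^ (2 * n + l) * (1 / 4) ^ n = 2 ^ l := by
  rw [pow_add, pow_mul, mul_right_comm, ← mul_pow]
  norm_num

theorem exists_elementaryInterval_eq_Ico_quarterSum_succ (p j : ℕ) :
    ∃ a < 2 ^ (2 * (p + j + 1)), elementaryInterval 2 (2 * (p + j + 1)) a =
      Set.Ico ((1 / 4) ^ p * quarterSum j) ((1 / 4) ^ p * quarterSum (j + 1)) := by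
  obtain ⟨a, ha, hqa⟩ := exists_nat_quarterSum_eq j
  refine ⟨4 * a, ?_, ?_⟩
  · calc 4 * a < 4 ^ p * 4 ^ j * 4 := by nlinarith [Nat.one_le_pow p 4 (by norm_num)]
      _ = 2 ^ (2 * (p + j + 1)) := by rw [pow_mul]; ring
  · rw [elementaryInterval, quarterSum_succ, hqa, pow_mul]
    simp only [one_div, inv_pow]
    congr 1 <;> push_cast <;> field_simp <;> ring

theorem exists_elementaryInterval_eq_Ico_quarterSum_add_half (p j : ℕ) :
    ∃ a < 2 ^ (2 * (p + j) + 1), elementaryInterval 2 (2 * (p + j) + 1) a =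
      Set.Ico ((1 / 4) ^ p * quarterSum j) ((1 / 4) ^ p * (quarterSum j + (1 / 4) ^ j / 2)) := by
  obtain ⟨a, ha, hqa⟩ := exists_nat_quarterSum_eq j
  refine ⟨2 * a, ?_, ?_⟩
  · calc 2 * a < 4 ^ p * 4 ^ j * 2 := by nlinarith [Nat.one_le_pow p 4 (by norm_num)]
      _ = 2 ^ (2 * (p + j) + 1) := by rw [pow_succ, pow_mul]; ring
  · rw [elementaryInterval, hqa, pow_succ, pow_mul]
    simp only [one_div, inv_pow]
    congr 1 <;> push_cast <;> field_simp <;> ring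

/-- The point `γ` of the theorem for `m = 4q`. -/
noncomputable def levinPoint (q : ℕ) : Fin 2 → ℝ := ![quarterSum q, (1 / 4) ^ q * quarterSum q]

theorem levinPoint_mem_Ico (q : ℕ) (i : Fin 2) : levinPoint q i ∈ Set.Ico (0 : ℝ) 1 := by
  have hpow : (1 / 4 : ℝ) ^ q ≤ 1 := pow_le_one₀ (by norm_num) (by norm_num)
  fin_cases i
  · exact ⟨quarterSum_nonneg q, quarterSum_lt_one q⟩
  · exact ⟨mul_nonneg (by positivity) (quarterSum_nonneg q),
      mul_lt_one_of_nonneg_of_lt_one_right hpow (quarterSum_nonneg q) (quarterSum_lt_one q)⟩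

section LevinNet

variable {q : ℕ} {x : ℕ → Fin 2 → ℝ}

theorem IsNet.card_cell_of_add_two_le (hnet : IsNet 2 0 (4 * q) x) {j k : ℕ} (h : j + k + 2 ≤ q) :
    #{n ∈ range (2 ^ (4 * q)) | x n 0 ∈ Set.Ico (quarterSum j) (quarterSum (j + 1)) ∧
      x n 1 ∈ Set.Ico ((1 / 4) ^ q * quarterSum k) ((1 / 4) ^ q * quarterSum (k + 1))} =
      2 ^ (2 * (q - j - k - 2)) := by
  obtain ⟨a, ha, hI⟩ := exists_elementaryInterval_eq_Ico_quarterSum_succ 0 j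
  obtain ⟨c, hc, hJ⟩ := exists_elementaryInterval_eq_Ico_quarterSum_succ q k
  have hcard := hnet.card_filter_elementaryInterval two_pos (2 * (q - j - k - 2))
    (d := ![_, _]) (a := ![a, c]) (Fin.forall_fin_two.2 ⟨ha, hc⟩)
    (by simp only [Fin.sum_univ_two, Matrix.cons_val_zero, Matrix.cons_val_one]; omega)
  rw [zero_add (2 * _)] at hcard
  rw [← hcard]
  congr 1
  refine filter_congr fun n _ => ?_
  rw [Fin.forall_fin_two]
  simp only [Matrix.cons_val_zero, Matrix.cons_val_one, hI, hJ, pow_zero, one_mul]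

/-- The box is an elementary box of volume `2^{-4q}` containing `x 0`, so it holds no other point
of the net. -/
theorem IsNet.eq_zero_of_mem_Ico_add_half (hnet : IsNet 2 0 (4 * q) x)
    (hx0 : x 0 = levinPoint q) {j u n : ℕ} (hju : j + u + 1 = q) (hn : n < 2 ^ (4 * q))
    (hn0 : x n 0 ∈ Set.Ico (quarterSum j) (quarterSum j + (1 / 4) ^ j / 2))
    (hn1 : x n 1 ∈ Set.Ico ((1 / 4) ^ q * quarterSum u)
      ((1 / 4) ^ q * (quarterSum u + (1 / 4) ^ u / 2))) : n = 0 := by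
  obtain ⟨a, ha, hI⟩ := exists_elementaryInterval_eq_Ico_quarterSum_add_half 0 j
  obtain ⟨c, hc, hJ⟩ := exists_elementaryInterval_eq_Ico_quarterSum_add_half q u
  have hmem : ∀ n', x n' 0 ∈ Set.Ico (quarterSum j) (quarterSum j + (1 / 4) ^ j / 2) →
      x n' 1 ∈ Set.Ico ((1 / 4) ^ q * quarterSum u)
        ((1 / 4) ^ q * (quarterSum u + (1 / 4) ^ u / 2)) →
      ∀ i, x n' i ∈ elementaryInterval 2 (![2 * (0 + j) + 1, 2 * (q + u) + 1] i) (![a, c] i) := by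
    intro n' h0 h1
    rw [Fin.forall_fin_two]
    simp only [Matrix.cons_val_zero, Matrix.cons_val_one, hI, hJ, pow_zero, one_mul]
    exact ⟨h0, h1⟩
  have hq : (0 : ℝ) < (1 / 4) ^ q := by positivity
  refine hnet.eq_of_mem_elementaryInterval (Fin.forall_fin_two.2 ⟨ha, hc⟩) ?_ hn (by positivity)
    (hmem n hn0 hn1) (hmem 0 ?_ ?_)
  · simp only [Fin.sum_univ_two, Matrix.cons_val_zero, Matrix.cons_val_one]
    omega
  · rw [hx0]
    exact ⟨quarterSum_monotone (by omega), quarterSum_lt_add_half j q⟩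
  · rw [hx0]
    exact ⟨mul_le_mul_of_nonneg_left (quarterSum_monotone (by omega)) hq.le,
      mul_lt_mul_of_pos_left (quarterSum_lt_add_half u q) hq⟩

theorem IsNet.card_cell_eq_zero (hnet : IsNet 2 0 (4 * q) x) (hx0 : x 0 = levinPoint q)
    {j k : ℕ} (hj : j < q) (hk : k < q) (h : q < j + k + 2) :
    #{n ∈ range (2 ^ (4 * q)) | x n 0 ∈ Set.Ico (quarterSum j) (quarterSum (j + 1)) ∧
      x n 1 ∈ Set.Ico ((1 / 4) ^ q * quarterSum k) ((1 / 4) ^ q * quarterSum (k + 1))} = 0 := by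
  have hq : (0 : ℝ) < (1 / 4) ^ q := by positivity
  rw [card_eq_zero, filter_eq_empty_iff]
  rintro n hn ⟨⟨h0l, h0r⟩, ⟨h1l, h1r⟩⟩
  obtain rfl : n = 0 := hnet.eq_zero_of_mem_Ico_add_half hx0 (u := q - j - 1) (by omega)
    (mem_range.1 hn) ⟨h0l, h0r.trans (quarterSum_lt_add_half j (j + 1))⟩
    ⟨(mul_le_mul_of_nonneg_left (quarterSum_monotone (by omega)) hq.le).trans h1l,
      h1r.trans (mul_lt_mul_of_pos_left (quarterSum_lt_add_half _ (k + 1)) hq)⟩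
  rw [hx0] at h1r
  exact h1r.not_ge (mul_le_mul_of_nonneg_left (quarterSum_monotone (by omega)) hq.le)

theorem IsNet.cell_sub_volume_le (hnet : IsNet 2 0 (4 * q) x) (hx0 : x 0 = levinPoint q)
    {j k : ℕ} (hj : j < q) (hk : k < q) :
    (#{n ∈ range (2 ^ (4 * q)) | x n 0 ∈ Set.Ico (quarterSum j) (quarterSum (j + 1)) ∧
      x n 1 ∈ Set.Ico ((1 / 4) ^ q * quarterSum k) ((1 / 4) ^ q * quarterSum (k + 1))} : ℝ) -
      ((2 ^ (4 * q) : ℕ) : ℝ) * ((quarterSum (j + 1) - quarterSum j) *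
        ((1 / 4) ^ q * quarterSum (k + 1) - (1 / 4) ^ q * quarterSum k)) ≤
      if k = q - 1 - j then -(1 / 4) else 0 := by
  have hvol : ((2 ^ (4 * q) : ℕ) : ℝ) * ((quarterSum (j + 1) - quarterSum j) *
      ((1 / 4) ^ q * quarterSum (k + 1) - (1 / 4) ^ q * quarterSum k)) =
      2 ^ (4 * q) * (1 / 4) ^ (q + j + k + 2) := by
    rw [quarterSum_succ, quarterSum_succ]
    push_cast
    ring
  rw [hvol]
  by_cases hfull : j + k + 2 ≤ q
  · rw [hnet.card_cell_of_add_two_le hfull, if_neg (by omega),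
      show 4 * q = 2 * (q + j + k + 2) + 2 * (q - j - k - 2) by omega, two_pow_mul_quarter_pow]
    push_cast
    simp
  · rw [hnet.card_cell_eq_zero hx0 hj hk (by omega), Nat.cast_zero, zero_sub]
    split_ifs with hdiag
    · rw [show q + j + k + 2 = 2 * q + 1 by omega, pow_succ, ← mul_assoc,
        show 4 * q = 2 * (2 * q) + 0 by ring, two_pow_mul_quarter_pow]
      norm_num
    · exact neg_nonpos.2 (by positivity)

theorem IsNet.disc_levinPoint_le (hnet : IsNet 2 0 (4 * q) x) (hx0 : x 0 = levinPoint q) :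
    disc x 0 (2 ^ (4 * q)) (levinPoint q) ≤ -(q / 4) := by
  have hv : Monotone fun k => (1 / 4 : ℝ) ^ q * quarterSum k := fun _ _ h =>
    mul_le_mul_of_nonneg_left (quarterSum_monotone h) (by positivity)
  refine (disc_eq_sum_cells x _ quarterSum_monotone hv quarterSum_zero (by simp) q q).trans_le
    ((sum_le_sum fun j hj => sum_le_sum fun k hk =>
      hnet.cell_sub_volume_le hx0 (mem_range.1 hj) (mem_range.1 hk)).trans_eq ?_)
  rw [sum_congr rfl fun j hj => by
    rw [sum_ite_eq', if_pos (mem_range.2 (by have := mem_range.1 hj; omega))]]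
  rw [sum_const, card_range, nsmul_eq_mul]
  ring

end LevinNet

theorem levin_net_dim_two_general (m : ℕ) (hmod : m % 4 = 0)
    (x : ℕ → Fin 2 → ℝ) (hnet : IsNet 2 0 m x)
    (γ : Fin 2 → ℝ)
    (hγ1 : γ 0 = ∑ j ∈ Finset.Icc 1 (m / 4), ((1 : ℝ) / 2) ^ (2 * j))
    (hγ2 : γ 1 = ∑ j ∈ Finset.Icc 1 (m / 4), ((1 : ℝ) / 2) ^ (m / 2 + 2 * j))
    (hx0 : x 0 = γ) :
    (1 / ((2 : ℝ) ^ m)) * disc x 0 (2 ^ m) γ ≤ -(1 / 4) * (m : ℝ) / (2 : ℝ) ^ (m + 2) ∧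
    Dstar x 0 (2 ^ m) ≥ (1 / (16 * Real.log 2)) * Real.log ((2 : ℝ) ^ m) / (2 : ℝ) ^ m := by
  obtain ⟨q, rfl⟩ : ∃ q, m = 4 * q := ⟨m / 4, by omega⟩
  obtain rfl : γ = levinPoint q := by
    refine funext (Fin.forall_fin_two.2 ⟨?_, ?_⟩)
    · rw [hγ1, show 4 * q / 4 = q by omega]
      show _ = quarterSum q
      simpa using sum_half_pow_eq_quarterSum 0 q
    · rw [hγ2, show 4 * q / 4 = q by omega, show 4 * q / 2 = 2 * q by omega,
        sum_half_pow_eq_quarterSum]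
      rfl
  have hdisc := hnet.disc_levinPoint_le hx0
  constructor
  · calc 1 / (2 : ℝ) ^ (4 * q) * disc x 0 (2 ^ (4 * q)) (levinPoint q)
        ≤ 1 / 2 ^ (4 * q) * -(q / 4) := mul_le_mul_of_nonneg_left hdisc (by positivity)
      _ = -(1 / 4) * ((4 * q : ℕ) : ℝ) / 2 ^ (4 * q + 2) := by push_cast; field_simp; ring
  · calc 1 / (16 * Real.log 2) * Real.log (2 ^ (4 * q)) / 2 ^ (4 * q)
        = q / 4 / ((2 ^ (4 * q) : ℕ) : ℝ) := by rw [Real.log_pow]; push_cast; field_simp; ring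
      _ ≤ |disc x 0 (2 ^ (4 * q)) (levinPoint q)| / ((2 ^ (4 * q) : ℕ) : ℝ) := by
        gcongr
        exact (le_neg.1 hdisc).trans (neg_le_abs _)
      _ ≤ Dstar x 0 (2 ^ (4 * q)) := abs_disc_div_le_Dstar x 0 _ (levinPoint_mem_Ico q)

/-- Theorem 3: the exact lower bound for a `(0,m,2)`-net in base `2` whose first
point is the special point `γ`. -/
theorem levin_net_dim_two (m : ℕ) (hm4 : 4 ≤ m) (hmod : m % 4 = 0)
    (x : ℕ → Fin 2 → ℝ) (hnet : IsNet 2 0 m x)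
    (γ : Fin 2 → ℝ)
    (hγ1 : γ 0 = ∑ j ∈ Finset.Icc 1 (m / 4), ((1 : ℝ) / 2) ^ (2 * j))
    (hγ2 : γ 1 = ∑ j ∈ Finset.Icc 1 (m / 4), ((1 : ℝ) / 2) ^ (m / 2 + 2 * j))
    (hx0 : x 0 = γ) :
    (1 / ((2 : ℝ) ^ m)) * disc x 0 (2 ^ m) γ ≤ -(1 / 4) * (m : ℝ) / (2 : ℝ) ^ (m + 2) ∧
    Dstar x 0 (2 ^ m) ≥ (1 / (16 * Real.log 2)) * Real.log ((2 : ℝ) ^ m) / (2 : ℝ) ^ m :=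
  levin_net_dim_two_general m hmod x hnet γ hγ1 hγ2 hx0
end

section
/- Let b ≥ 2, let x = Σ_{j≥1} x_j b^{−j} with digits x_j ∈ {0,...,b−1}, and let [x]_r = Σ_{j=1}^r x_j b^{−j} denote its truncation. Then for every n ∈ ℕ₀ and r ≥ 1: φ_b(n) ∈ [[x]_r, [x]_r + b^{−r}) if and only if n ≡ ẋ_r (mod b^r), where ẋ_r = Σ_{j=1}^r x_j b^{j−1}. -/
/-!
Multiplying by `b ^ r` shifts the base-`b` expansion of `φ_b(n)`:
`b ^ r * φ_b(n) = R + φ_b(n / b ^ r)`, where the natural number `R` has as digits the `r` lowest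
digits of `n` in reversed order. Since `φ_b` takes values in `[0, 1)`, `R` is the floor of
`b ^ r * φ_b(n)`, so `φ_b(n)` lies in the given interval iff `R = Σ_{j ≤ r} x_j b ^ (r - j)`.
By uniqueness of base-`b` expansions this says that the `r` lowest digits of `n` are
`x_1, …, x_r`, that is, `n % b ^ r = ẋ_r`.
-/

open Finset

open scoped Classical

theorem sum_Icc_one_eq_sum_range {M : Type*} [AddCommMonoid M] (f : ℕ → M) (r : ℕ) :
    ∑ j ∈ Icc 1 r, f j = ∑ j ∈ range r, f (j + 1) := by
  rw [range_eq_Ico, sum_Ico_add' f, zero_add, Finset.Ico_add_one_right_eq_Icc]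

section Digits

variable {b r : ℕ}

theorem sum_range_mul_pow_lt {a : ℕ → ℕ} (ha : ∀ i < r, a i < b) :
    ∑ i ∈ range r, a i * b ^ i < b ^ r := by
  simpa [finFunctionFinEquiv_apply, Fin.sum_univ_eq_sum_range (fun i => a i * b ^ i)] using
    (finFunctionFinEquiv fun i : Fin r => (⟨a i, ha i i.2⟩ : Fin b)).isLt

theorem sum_range_mul_pow_inj {a c : ℕ → ℕ} (ha : ∀ i < r, a i < b) (hc : ∀ i < r, c i < b) :
    ∑ i ∈ range r, a i * b ^ i = ∑ i ∈ range r, c i * b ^ i ↔ ∀ i < r, a i = c i := by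
  refine ⟨fun h i hi => ?_, fun h => sum_congr rfl fun i hi => by rw [h i (mem_range.1 hi)]⟩
  have := (finFunctionFinEquiv (m := b) (n := r)).injective
    (a₁ := fun i => ⟨a i, ha i i.2⟩) (a₂ := fun i => ⟨c i, hc i i.2⟩) <| Fin.ext <| by
      simpa [finFunctionFinEquiv_apply, Fin.sum_univ_eq_sum_range (fun i => a i * b ^ i),
        Fin.sum_univ_eq_sum_range (fun i => c i * b ^ i)] using h
  exact congrArg Fin.val (congrFun this ⟨i, hi⟩)

theorem sum_range_mul_pow_reflect (a : ℕ → ℕ) :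
    ∑ i ∈ range r, a i * b ^ (r - 1 - i) = ∑ i ∈ range r, a (r - 1 - i) * b ^ i := by
  rw [← sum_range_reflect]
  refine sum_congr rfl fun i hi => ?_
  rw [Nat.sub_sub_self (Nat.le_sub_one_of_lt (mem_range.1 hi))]

theorem sum_range_mul_pow_sub_lt {a : ℕ → ℕ} (ha : ∀ i < r, a i < b) :
    ∑ i ∈ range r, a i * b ^ (r - 1 - i) < b ^ r := by
  rw [sum_range_mul_pow_reflect]
  exact sum_range_mul_pow_lt fun i hi => ha _ (by omega)

theorem sum_range_mul_pow_sub_inj {a c : ℕ → ℕ} (ha : ∀ i < r, a i < b) (hc : ∀ i < r, c i < b) :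
    ∑ i ∈ range r, a i * b ^ (r - 1 - i) = ∑ i ∈ range r, c i * b ^ (r - 1 - i) ↔
      ∀ i < r, a i = c i := by
  rw [sum_range_mul_pow_reflect, sum_range_mul_pow_reflect,
    sum_range_mul_pow_inj (fun i hi => ha _ (by omega)) (fun i hi => hc _ (by omega))]
  refine ⟨fun h i hi => ?_, fun h i hi => h _ (by omega)⟩
  simpa [Nat.sub_sub_self (by omega : i ≤ r - 1)] using h (r - 1 - i) (by omega)

theorem mod_pow_eq_sum_digits (n : ℕ) : n % b ^ r = ∑ i ∈ range r, n / b ^ i % b * b ^ i := by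
  induction r with
  | zero => simp [Nat.mod_one]
  | succ r ih => rw [Nat.mod_pow_succ, sum_range_succ, ← ih, mul_comm]

theorem mod_pow_eq_sum_iff (hb : 0 < b) (n : ℕ) {a : ℕ → ℕ} (ha : ∀ i < r, a i < b) :
    n % b ^ r = ∑ i ∈ range r, a i * b ^ i ↔ ∀ i < r, n / b ^ i % b = a i := by
  rw [mod_pow_eq_sum_digits, sum_range_mul_pow_inj (fun i _ => Nat.mod_lt _ hb) ha]

theorem pow_mul_sum_div_pow_succ (hb : b ≠ 0) (a : ℕ → ℕ) :
    (b : ℝ) ^ r * ∑ i ∈ range r, (a i : ℝ) / (b : ℝ) ^ (i + 1) =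
      ((∑ i ∈ range r, a i * b ^ (r - 1 - i) : ℕ) : ℝ) := by
  rw [mul_sum]
  push_cast
  refine sum_congr rfl fun i hi => ?_
  have hpow : (b : ℝ) ^ r = (b : ℝ) ^ (r - 1 - i) * (b : ℝ) ^ (i + 1) := by
    rw [← pow_add]; congr 1; have := mem_range.1 hi; omega
  rw [hpow]
  field_simp

end Digits

section RadicalInverse

variable {b : ℕ}

theorem summable_radInv (hb : 1 < b) (n : ℕ) :
    Summable fun j : ℕ => ((n / b ^ j % b : ℕ) : ℝ) / (b : ℝ) ^ (j + 1) := by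
  refine summable_of_ne_finset_zero (s := range n) fun j hj => ?_
  rw [Nat.div_eq_of_lt ((not_lt.1 (mem_range.not.1 hj)).trans_lt (Nat.lt_pow_self hb))]
  simp

@[simp]
theorem radInv_zero : radInv b 0 = 0 := by
  simp [radInv]

theorem radInv_nonneg (n : ℕ) : 0 ≤ radInv b n :=
  tsum_nonneg fun _ => by positivity

theorem radInv_eq_sum_add_div (hb : 1 < b) (n r : ℕ) :
    radInv b n = ∑ j ∈ range r, ((n / b ^ j % b : ℕ) : ℝ) / (b : ℝ) ^ (j + 1) +
      radInv b (n / b ^ r) / (b : ℝ) ^ r := by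
  rw [radInv, ← (summable_radInv hb n).sum_add_tsum_nat_add r, radInv, ← tsum_div_const]
  congr 1
  refine tsum_congr fun j => ?_
  rw [Nat.div_div_eq_div_mul, ← pow_add, add_comm r j, div_div, ← pow_add, add_right_comm]

theorem pow_mul_radInv (hb : 1 < b) (n r : ℕ) :
    (b : ℝ) ^ r * radInv b n =
      ((∑ j ∈ range r, n / b ^ j % b * b ^ (r - 1 - j) : ℕ) : ℝ) + radInv b (n / b ^ r) := by
  have hpow : (b : ℝ) ^ r ≠ 0 := pow_ne_zero _ (Nat.cast_ne_zero.2 (by omega))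
  rw [radInv_eq_sum_add_div hb n r, mul_add, pow_mul_sum_div_pow_succ (by omega),
    mul_div_cancel₀ _ hpow]

theorem radInv_lt_one (hb : 1 < b) (n : ℕ) : radInv b n < 1 := by
  have h := pow_mul_radInv hb n n
  rw [Nat.div_eq_of_lt (Nat.lt_pow_self hb), radInv_zero, add_zero] at h
  have hlt := sum_range_mul_pow_sub_lt (b := b) (r := n)
    (a := fun j => n / b ^ j % b) fun j _ => Nat.mod_lt _ (by omega)
  have hpos : (0 : ℝ) < (b : ℝ) ^ n := by positivity
  rw [← mul_lt_mul_iff_right₀ hpos, mul_one, h]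
  exact_mod_cast hlt

theorem floor_pow_mul_radInv (hb : 1 < b) (n r : ℕ) :
    ⌊(b : ℝ) ^ r * radInv b n⌋₊ = ∑ j ∈ range r, n / b ^ j % b * b ^ (r - 1 - j) := by
  rw [pow_mul_radInv hb, add_comm, Nat.floor_add_natCast (radInv_nonneg _),
    Nat.floor_eq_zero.2 (radInv_lt_one hb _), zero_add]

theorem radInv_mem_Ico_iff (hb : 1 < b) (n : ℕ) {r : ℕ} {a : ℕ → ℕ} (ha : ∀ j < r, a j < b) :
    radInv b n ∈ Set.Ico (∑ j ∈ range r, (a j : ℝ) / (b : ℝ) ^ (j + 1))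
        (∑ j ∈ range r, (a j : ℝ) / (b : ℝ) ^ (j + 1) + ((b : ℝ) ^ r)⁻¹) ↔
      ∀ j < r, n / b ^ j % b = a j := by
  have hpos : (0 : ℝ) < (b : ℝ) ^ r := by positivity
  have hdig : ∀ j < r, n / b ^ j % b < b := fun j _ => Nat.mod_lt _ (by omega)
  rw [Set.mem_Ico, ← mul_le_mul_iff_right₀ hpos, ← mul_lt_mul_iff_right₀ hpos, mul_add,
    mul_inv_cancel₀ hpos.ne', pow_mul_sum_div_pow_succ (by omega),
    ← Nat.floor_eq_iff (mul_nonneg hpos.le (radInv_nonneg n)), floor_pow_mul_radInv hb,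
    sum_range_mul_pow_sub_inj hdig ha]

end RadicalInverse

theorem radInv_mem_iff_mod_general (b : ℕ) (hb : 2 ≤ b) (x : ℕ → ℕ) (hx : ∀ j, x j < b)
    (n r : ℕ) :
    radInv b n ∈ Set.Ico (∑ j ∈ Finset.Icc 1 r, (x j : ℝ) / (b : ℝ) ^ j)
        ((∑ j ∈ Finset.Icc 1 r, (x j : ℝ) / (b : ℝ) ^ j) + ((b : ℝ) ^ r)⁻¹) ↔
      n ≡ (∑ j ∈ Finset.Icc 1 r, x j * b ^ (j - 1)) [MOD b ^ r] := by
  have hx' : ∀ j < r, x (j + 1) < b := fun j _ => hx (j + 1)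
  simp only [sum_Icc_one_eq_sum_range, Nat.add_sub_cancel]
  rw [radInv_mem_Ico_iff hb n hx', Nat.ModEq, Nat.mod_eq_of_lt (sum_range_mul_pow_lt hx'),
    mod_pow_eq_sum_iff (by omega) n hx']

/-- Lemma 4.1: the radical inverse `φ_b(n)` lies in the elementary interval
determined by the first `r` digits of `x` iff `n ≡ ẋ_r (mod b^r)`. -/
theorem radInv_mem_iff_mod (b : ℕ) (hb : 2 ≤ b) (x : ℕ → ℕ) (hx : ∀ j, x j < b)
    (n r : ℕ) (hr : 1 ≤ r) :
    radInv b n ∈ Set.Ico (∑ j ∈ Finset.Icc 1 r, (x j : ℝ) / (b : ℝ) ^ j)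
        ((∑ j ∈ Finset.Icc 1 r, (x j : ℝ) / (b : ℝ) ^ j) + ((b : ℝ) ^ r)⁻¹) ↔
      n ≡ (∑ j ∈ Finset.Icc 1 r, x j * b ^ (j - 1)) [MOD b ^ r] :=
  radInv_mem_iff_mod_general b hb x hx n r
end

section
/- Let s = 2, b_1 = 2, b_2 = 3, so that τ_1 = 2 and τ_2 = 1. Then for every k = (k_1,k_2) with 1 ≤ k_1,k_2 ≤ m, A_k / B_{τ·k} = 1/6, i.e. A_k = 2^{2k_1 − 1} · 3^{k_2 − 1}. -/
open Finset

open scoped Classical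

/-- For the Halton sequence in bases `2` and `3` (so `τ₁ = 2`, `τ₂ = 1`) one has
`A_k = 2^{2k₁−1}·3^{k₂−1}`, i.e. `A_k / B_{τ·k} = 1/6`. -/
theorem halton_Ak_value (k₁ k₂ : ℕ) (hk₁ : 1 ≤ k₁) (hk₂ : 1 ≤ k₂)
    (M₁ M₂ : ℤ)
    (hM₁ : M₁ * 3 ^ k₂ ≡ 1 [ZMOD ((2 : ℤ) ^ (2 * k₁))])
    (hM₂ : M₂ * 2 ^ (2 * k₁) ≡ 1 [ZMOD ((3 : ℤ) ^ k₂)])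
    (A : ℕ) (hA : A < 2 ^ (2 * k₁) * 3 ^ k₂)
    (hA2 : (A : ℤ) ≡ -(M₁ * (2 ^ (2 * k₁ - 1) * 3 ^ k₂) + M₂ * (2 ^ (2 * k₁) * 3 ^ (k₂ - 1)))
      [ZMOD ((2 : ℤ) ^ (2 * k₁) * 3 ^ k₂)]) :
    A = 2 ^ (2 * k₁ - 1) * 3 ^ (k₂ - 1) ∧
    (A : ℝ) / ((2 : ℝ) ^ (2 * k₁) * 3 ^ k₂) = 1 / 6 := by
  obtain ⟨j, rfl⟩ := Nat.exists_eq_add_of_le hk₁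
  obtain ⟨l, rfl⟩ := Nat.exists_eq_add_of_le hk₂
  have e1 : 2 * (1 + j) = 2 * j + 2 := by ring
  have e2 : 2 * j + 2 - 1 = 2 * j + 1 := by omega
  have e3 : 1 + l - 1 = l := by omega
  rw [e1] at hM₁ hM₂ hA hA2 ⊢
  simp only [e2, e3] at hA2 ⊢
  set N : ℤ := 2 ^ (2 * j + 2) * 3 ^ (1 + l) with hN
  set T : ℤ := 2 ^ (2 * j + 1) * 3 ^ l with hT
  -- even part
  have hd1 : (2 : ℤ) ∣ 1 - M₁ * 3 ^ (1 + l) :=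
    dvd_trans (dvd_pow_self 2 (by omega)) hM₁.dvd
  have hd2 : (2 : ℤ) ∣ (3 : ℤ) ^ l + 1 :=
    (Odd.add_one (Odd.pow ⟨1, by ring⟩)).two_dvd
  obtain ⟨c, hc⟩ : (2 : ℤ) ∣ M₁ * 3 ^ (1 + l) + 3 ^ l := by
    obtain ⟨u, hu⟩ := dvd_add hd1 hd2
    exact ⟨-u + 1 + 3 ^ l, by linear_combination -hu⟩
  -- mod 3 part
  have hd3 : (3 : ℤ) ∣ M₂ - 1 := by
    have h1 : (3 : ℤ) ∣ 1 - M₂ * 2 ^ (2 * j + 2) :=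
      dvd_trans (dvd_pow_self 3 (by omega)) hM₂.dvd
    have h4 : ((4 : ℤ)) ≡ 1 [ZMOD 3] := by decide
    have h2 : (3 : ℤ) ∣ (4 : ℤ) ^ (j + 1) - 1 := by
      have := (h4.pow (j + 1)).symm.dvd
      simpa using this
    have h5 : (2 : ℤ) ^ (2 * j + 2) = 4 ^ (j + 1) := by
      rw [show (4 : ℤ) = 2 ^ 2 by norm_num, ← pow_mul]; ring_nf
    obtain ⟨u, hu⟩ := h1
    obtain ⟨v, hv⟩ := h2
    refine ⟨-u - M₂ * v, ?_⟩
    have : M₂ - 1 = -(1 - M₂ * 2 ^ (2 * j + 2)) - M₂ * ((4 : ℤ) ^ (j + 1) - 1) := by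
      rw [h5]; ring
    rw [this, hu, hv]; ring
  obtain ⟨d, hd⟩ := hd3
  -- the key congruence
  have hX : N ∣ T -
      -(M₁ * (2 ^ (2 * j + 1) * 3 ^ (1 + l)) + M₂ * (2 ^ (2 * j + 2) * 3 ^ l)) := by
    have hcop : IsCoprime ((2 : ℤ) ^ (2 * j + 2)) ((3 : ℤ) ^ (1 + l)) := by
      refine IsCoprime.pow ?_
      rw [Int.isCoprime_iff_gcd_eq_one]; decide
    refine hcop.mul_dvd ⟨c + M₂ * 3 ^ l, ?_⟩ ⟨2 ^ (2 * j + 1) * (2 * d + 1) + M₁ * 2 ^ (2 * j + 1), ?_⟩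
    · rw [hT]; linear_combination (2 : ℤ) ^ (2 * j + 1) * hc
    · rw [hT]; linear_combination (2 : ℤ) ^ (2 * j + 1) * 3 ^ l * 2 * hd
  have key : (A : ℤ) ≡ T [ZMOD N] := hA2.trans (Int.modEq_iff_dvd.mpr hX)
  have hT0 : (0 : ℤ) < T := by positivity
  have hNT : N = 6 * T := by rw [hN, hT]; ring
  have hAN : (A : ℤ) < N := by rw [hN]; exact_mod_cast hA
  have hzero : T - (A : ℤ) = 0 := by
    refine Int.eq_zero_of_abs_lt_dvd key.dvd ?_
    rw [abs_lt]
    constructor <;> [linarith [Int.ofNat_nonneg A]; linarith]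
  have hAT : (A : ℤ) = T := by omega
  have hATn : A = 2 ^ (2 * j + 1) * 3 ^ l := by
    rw [hT] at hAT; exact_mod_cast hAT
  refine ⟨hATn, ?_⟩
  rw [hATn]
  push_cast
  rw [div_eq_div_iff (by positivity) (by norm_num)]
  ring
end
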